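/- arXiv:2111.04691 — 2 statements merged into one kernel-verified Lean document; each statement's English description precedes it below -/
import Mathlib

section
/- Let V: ℝ → [0,∞) be an Orlicz function, R ∈ (0,∞), and λ: ℝ → ℝ a bounded continuous function. Then there exists a unique α(λ) ∈ (-∞,0) such that ∫_ℝ V(x) e^{α(λ)V(x)+λ(x)} dx = R · ∫_ℝ e^{α(λ)V(x)+λ(x)} dx; moreover, for this α(λ), the variance of V under the probability density x ↦ e^{α(λ)V(x)+λ(x)}/∫_ℝ e^{α(λ)V(t)+λ(t)} dt, namely ∫ V(x)² e^{α(λ)V(x)+λ(x)-φ_V(α(λ),λ)} dx − (∫ V(x) e^{α(λ)V(x)+λ(x)-φ_V(α(λ),λ)} dx)², is strictly positive and finite. -/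
/-!
Put `F(α) = momentGap V lam R α = ∫ (V - R) e^{αV + λ}`, so that the equation reads `F(α) = 0`.
An Orlicz function grows at least linearly, so `V^k e^{αV + λ}` is integrable for every `α < 0` and `F` is continuous on
`(-∞, 0)`. For `α₁ < α₂ < 0` and `β = α₂ - α₁`,
`F(α₂) = e^{βR} F(α₁) + ∫ (V - R)(e^{βV} - e^{βR}) e^{α₁V + λ}`, and the last integrand is
nonnegative and positive at `0`; hence `F(α₁) ≥ 0` forces `F(α₂) > 0`, which gives uniqueness.
As `α → -∞` the weight concentrates near `0`, where `V < R`, so `F < 0`; as `α → 0⁻` the weight of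
a long interval on which `V ≥ 2R` outgrows the bounded region where `V < 2R`, so `F > 0`. The
intermediate value theorem gives the root, and there the variance equals
`∫ (V - R)² e^{αV + λ} / ∫ e^{αV + λ} > 0`.
-/

open MeasureTheory Real Filter Topology ENNReal

noncomputable section

/-- An Orlicz function: convex, symmetric, vanishing only at `0`, nonnegative. -/
def IsOrlicz (V : ℝ → ℝ) : Prop :=
  ConvexOn ℝ Set.univ V ∧ (∀ x, V (-x) = V x) ∧ V 0 = 0 ∧ (∀ x, x ≠ 0 → 0 < V x) ∧
    (∀ x, 0 ≤ V x)

/-- `φ_V(α, λ) = log ∫ e^{α V(x) + λ(x)} dx`. -/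
def phiV (V lam : ℝ → ℝ) (α : ℝ) : ℝ := Real.log (∫ x : ℝ, Real.exp (α * V x + lam x))

open Set
open scoped Nat

theorem pow_mul_exp_neg_mul_le (k : ℕ) {m t : ℝ} (hm : 0 < m) (ht : 0 ≤ t) :
    t ^ k * exp (-(m * t)) ≤ k ! / m ^ k := by
  have h := pow_div_factorial_le_exp (x := m * t) (mul_nonneg hm.le ht) k
  rw [div_le_iff₀ (by positivity), mul_pow] at h
  rw [le_div_iff₀ (pow_pos hm k)]
  calc t ^ k * exp (-(m * t)) * m ^ k = m ^ k * t ^ k * exp (-(m * t)) := by ring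
    _ ≤ exp (m * t) * k ! * exp (-(m * t)) := by gcongr
    _ = k ! := by rw [mul_right_comm, ← exp_add, add_neg_cancel, exp_zero, one_mul]

theorem integrable_exp_neg_mul_abs {m : ℝ} (hm : 0 < m) :
    Integrable fun x : ℝ => exp (-(m * |x|)) := by
  have hIoi : IntegrableOn (fun x : ℝ => exp (-(m * |x|))) (Ioi 0) :=
    (exp_neg_integrableOn_Ioi 0 hm).congr_fun
      (fun x hx => by simp only [abs_of_pos (mem_Ioi.1 hx), neg_mul]) measurableSet_Ioi
  have hIio : IntegrableOn (fun x : ℝ => exp (-(m * |x|))) (Iio 0) := by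
    rw [← (Measure.measurePreserving_neg (volume : Measure ℝ)).integrableOn_comp_preimage
      (Homeomorph.neg ℝ).measurableEmbedding]
    simpa [Function.comp_def] using hIoi
  rw [← integrableOn_univ, ← Iio_union_Ici (a := (0 : ℝ)), integrableOn_union,
    integrableOn_Ici_iff_integrableOn_Ioi]
  exact ⟨hIio, hIoi⟩

namespace IsOrlicz

variable {V : ℝ → ℝ}

theorem nonneg (hV : IsOrlicz V) (x : ℝ) : 0 ≤ V x := hV.2.2.2.2 x

theorem map_zero (hV : IsOrlicz V) : V 0 = 0 := hV.2.2.1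

theorem pos (hV : IsOrlicz V) {x : ℝ} (hx : x ≠ 0) : 0 < V x := hV.2.2.2.1 x hx

theorem continuous (hV : IsOrlicz V) : Continuous V :=
  hV.1.locallyLipschitz.continuous

theorem apply_abs (hV : IsOrlicz V) (x : ℝ) : V |x| = V x := by
  rcases abs_choice x with h | h <;> rw [h]
  exact hV.2.1 x

theorem le_div_mul (hV : IsOrlicz V) {a b : ℝ} (ha : 0 ≤ a) (hab : a ≤ b) (hb : 0 < b) :
    V a ≤ a / b * V b := by
  have h := hV.1.2 (mem_univ b) (mem_univ 0) (div_nonneg ha hb.le)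
    (sub_nonneg.2 ((div_le_one hb).2 hab)) (add_sub_cancel _ _)
  simpa [hV.map_zero, div_mul_cancel₀ a hb.ne'] using h

theorem mul_abs_sub_one_le (hV : IsOrlicz V) (x : ℝ) : V 1 * (|x| - 1) ≤ V x := by
  rcases le_or_gt |x| 1 with hx | hx
  · nlinarith [hV.nonneg 1, hV.nonneg x]
  · have h := hV.le_div_mul zero_le_one hx.le (one_pos.trans hx)
    rw [hV.apply_abs, div_mul_eq_mul_div, one_mul, le_div_iff₀ (one_pos.trans hx)] at h
    nlinarith [hV.nonneg 1]

theorem exists_forall_le_of_le_abs (hV : IsOrlicz V) (T : ℝ) :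
    ∃ r, 0 ≤ r ∧ ∀ x, r ≤ |x| → T ≤ V x := by
  have hV1 := hV.pos one_ne_zero
  refine ⟨|T| / V 1 + 1, by positivity, fun x hx => ?_⟩
  have h := hV.mul_abs_sub_one_le x
  have : |T| ≤ V 1 * (|x| - 1) := by
    rw [← div_le_iff₀' hV1]; linarith
  linarith [le_abs_self T]

theorem integrable_exp_mul (hV : IsOrlicz V) {β : ℝ} (hβ : β < 0) :
    Integrable fun x => exp (β * V x) := by
  have hm : 0 < -β * V 1 := mul_pos (neg_pos.2 hβ) (hV.pos one_ne_zero)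
  refine ((integrable_exp_neg_mul_abs hm).const_mul (exp (-β * V 1))).mono'
    (hV.continuous.const_mul β).rexp.aestronglyMeasurable (ae_of_all _ fun x => ?_)
  rw [norm_of_nonneg (exp_pos _).le, ← exp_add, exp_le_exp]
  nlinarith [mul_le_mul_of_nonpos_left (hV.mul_abs_sub_one_le x) hβ.le]

end IsOrlicz

theorem sub_mul_exp_mul_sub_nonneg {β : ℝ} (hβ : 0 ≤ β) (s t : ℝ) :
    0 ≤ (s - t) * (exp (β * s) - exp (β * t)) := by
  rcases le_total s t with h | h
  · exact mul_nonneg_of_nonpos_of_nonpos (sub_nonpos.2 h)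
      (sub_nonpos.2 (exp_le_exp.2 (by gcongr)))
  · exact mul_nonneg (sub_nonneg.2 h) (sub_nonneg.2 (exp_le_exp.2 (by gcongr)))

theorem sub_mul_exp_le_exp_mul {a v R l : ℝ} (ha : a ≤ -1) (hR : 0 ≤ R) (hv : 0 ≤ v) :
    (v - R) * exp (a * v + l) ≤ exp ((a + 1) * R) * (v * exp (-1 * v + l)) := by
  rcases le_or_gt v R with h | h
  · exact (mul_nonpos_of_nonpos_of_nonneg (by linarith) (exp_pos _).le).trans (by positivity)
  calc (v - R) * exp (a * v + l) ≤ v * exp (a * v + l) :=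
        mul_le_mul_of_nonneg_right (by linarith) (exp_pos _).le
    _ = exp ((a + 1) * v) * (v * exp (-1 * v + l)) := by
        rw [mul_left_comm, ← exp_add]; congr 2; ring
    _ ≤ exp ((a + 1) * R) * (v * exp (-1 * v + l)) :=
        mul_le_mul_of_nonneg_right
          (exp_le_exp.2 (mul_le_mul_of_nonpos_left h.le (by linarith))) (by positivity)

theorem sub_mul_exp_le_of_le_half {a v R l C : ℝ} (ha : a ≤ 0) (hR : 0 ≤ R) (hv : v ≤ R / 2)
    (hl : -C ≤ l) : (v - R) * exp (a * v + l) ≤ -(R / 2 * exp (a * (R / 2) - C)) := by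
  have hexp : exp (a * (R / 2) - C) ≤ exp (a * v + l) :=
    exp_le_exp.2 (by nlinarith [mul_le_mul_of_nonpos_left hv ha])
  nlinarith [exp_pos (a * v + l)]

theorem le_sub_mul_exp_of_two_mul_le {b v R l C M : ℝ} (hb : b ≤ 0) (hR : 0 ≤ R)
    (hv : 2 * R ≤ v) (hvM : v ≤ M) (hl : -C ≤ l) :
    R * exp (b * M - C) ≤ (v - R) * exp (b * v + l) := by
  have hexp : exp (b * M - C) ≤ exp (b * v + l) :=
    exp_le_exp.2 (by nlinarith [mul_le_mul_of_nonpos_left hvM hb])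
  nlinarith [exp_pos (b * M - C)]

theorem neg_le_sub_mul_exp {b v R l C : ℝ} (hb : b ≤ 0) (hR : 0 ≤ R) (hv : 0 ≤ v) (hl : l ≤ C) :
    -(R * exp C) ≤ (v - R) * exp (b * v + l) := by
  have hexp : exp (b * v + l) ≤ exp C :=
    exp_le_exp.2 (by nlinarith [mul_nonpos_of_nonpos_of_nonneg hb hv])
  nlinarith [exp_pos (b * v + l)]

theorem integrable_indicator_Icc_const (a b c : ℝ) :
    Integrable ((Icc a b).indicator fun _ : ℝ => c) :=
  (integrableOn_const measure_Icc_lt_top.ne).integrable_indicator measurableSet_Icc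

theorem integral_indicator_Icc_const {a b : ℝ} (hab : a ≤ b) (c : ℝ) :
    ∫ x, (Icc a b).indicator (fun _ : ℝ => c) x = (b - a) * c := by
  rw [integral_indicator_const _ measurableSet_Icc, Real.volume_real_Icc_of_le hab, smul_eq_mul]

def momentGap (V lam : ℝ → ℝ) (R α : ℝ) : ℝ :=
  ∫ x, (V x - R) * exp (α * V x + lam x)

section GibbsWeight

variable {V lam : ℝ → ℝ} {C R : ℝ}

theorem IsOrlicz.integrable_pow_mul_exp (hV : IsOrlicz V) (hlam : Continuous lam)
    (hC : ∀ x, |lam x| ≤ C) (k : ℕ) {α : ℝ} (hα : α < 0) :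
    Integrable fun x => V x ^ k * exp (α * V x + lam x) := by
  have hm : 0 < -α / 2 := by linarith
  refine ((hV.integrable_exp_mul (by linarith : α / 2 < 0)).const_mul
    (k ! / (-α / 2) ^ k * exp C)).mono'
    ((hV.continuous.pow k).mul ((hV.continuous.const_mul α).add hlam).rexp).aestronglyMeasurable
    (ae_of_all _ fun x => ?_)
  have hVx := hV.nonneg x
  rw [norm_of_nonneg (by positivity)]
  calc V x ^ k * exp (α * V x + lam x)
      = V x ^ k * exp (-(-α / 2 * V x)) * (exp (α / 2 * V x) * exp (lam x)) := by
        rw [mul_assoc, ← exp_add, ← exp_add]; ring_nf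
    _ ≤ k ! / (-α / 2) ^ k * (exp (α / 2 * V x) * exp C) := by
        gcongr
        · exact pow_mul_exp_neg_mul_le k hm hVx
        · exact le_of_abs_le (hC x)
    _ = k ! / (-α / 2) ^ k * exp C * exp (α / 2 * V x) := by ring

theorem IsOrlicz.integrable_exp_add (hV : IsOrlicz V) (hlam : Continuous lam)
    (hC : ∀ x, |lam x| ≤ C) {α : ℝ} (hα : α < 0) :
    Integrable fun x => exp (α * V x + lam x) := by
  simpa using hV.integrable_pow_mul_exp hlam hC 0 hα

theorem IsOrlicz.integrable_mul_exp_add (hV : IsOrlicz V) (hlam : Continuous lam)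
    (hC : ∀ x, |lam x| ≤ C) {α : ℝ} (hα : α < 0) :
    Integrable fun x => V x * exp (α * V x + lam x) := by
  simpa using hV.integrable_pow_mul_exp hlam hC 1 hα

theorem IsOrlicz.integrable_sub_mul_exp_add (hV : IsOrlicz V) (hlam : Continuous lam)
    (hC : ∀ x, |lam x| ≤ C) (R : ℝ) {α : ℝ} (hα : α < 0) :
    Integrable fun x => (V x - R) * exp (α * V x + lam x) :=
  ((hV.integrable_mul_exp_add hlam hC hα).sub
    ((hV.integrable_exp_add hlam hC hα).const_mul R)).congr
    (ae_of_all _ fun _ => (sub_mul _ _ _).symm)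

theorem momentGap_eq_zero_iff (hV : IsOrlicz V) (hlam : Continuous lam)
    (hC : ∀ x, |lam x| ≤ C) (R : ℝ) {α : ℝ} (hα : α < 0) :
    momentGap V lam R α = 0 ↔
      ∫ x, V x * exp (α * V x + lam x) = R * ∫ x, exp (α * V x + lam x) := by
  simp only [momentGap, sub_mul]
  rw [integral_sub (hV.integrable_mul_exp_add hlam hC hα)
    ((hV.integrable_exp_add hlam hC hα).const_mul R), integral_const_mul, sub_eq_zero]

theorem continuousOn_momentGap (hV : IsOrlicz V) (hlam : Continuous lam)
    (hC : ∀ x, |lam x| ≤ C) (R : ℝ) {b : ℝ} (hb : b < 0) :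
    ContinuousOn (momentGap V lam R) (Iic b) := by
  refine continuousOn_of_dominated (bound := fun x => (V x + |R|) * exp (b * V x + lam x))
    (fun α _ => ((hV.continuous.sub continuous_const).mul
      ((hV.continuous.const_mul α).add hlam).rexp).aestronglyMeasurable)
    (fun α hα => ae_of_all _ fun x => ?_)
    (((hV.integrable_mul_exp_add hlam hC hb).add
      ((hV.integrable_exp_add hlam hC hb).const_mul |R|)).congr
      (ae_of_all _ fun _ => (add_mul _ _ _).symm))
    (ae_of_all _ fun _ => by fun_prop)
  have hVx := hV.nonneg x
  have hsub : ‖V x - R‖ ≤ V x + |R| := (norm_sub_le _ _).trans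
    (by rw [Real.norm_eq_abs, Real.norm_eq_abs, abs_of_nonneg hVx])
  have hexp : exp (α * V x + lam x) ≤ exp (b * V x + lam x) :=
    exp_le_exp.2 (by nlinarith [mul_le_mul_of_nonneg_right (mem_Iic.1 hα) hVx])
  rw [norm_mul, norm_of_nonneg (exp_pos _).le]
  exact mul_le_mul hsub hexp (exp_pos _).le (by positivity)

theorem momentGap_pos_of_lt (hV : IsOrlicz V) (hlam : Continuous lam)
    (hC : ∀ x, |lam x| ≤ C) (hR : R ≠ 0) {α₁ α₂ : ℝ} (h12 : α₁ < α₂) (hα₂ : α₂ < 0)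
    (h₁ : 0 ≤ momentGap V lam R α₁) : 0 < momentGap V lam R α₂ := by
  set β := α₂ - α₁
  have hVc := hV.continuous
  have hα₁ : α₁ < 0 := h12.trans hα₂
  have hsplit : ∀ x, (V x - R) * exp (α₂ * V x + lam x) =
      (V x - R) * (exp (β * V x) - exp (β * R)) * exp (α₁ * V x + lam x) +
        exp (β * R) * ((V x - R) * exp (α₁ * V x + lam x)) := by
    intro x
    rw [show α₂ * V x + lam x = β * V x + (α₁ * V x + lam x) by ring, exp_add]
    ring
  have hint₁ := hV.integrable_sub_mul_exp_add hlam hC R hα₁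
  have hcross : Integrable fun x =>
      (V x - R) * (exp (β * V x) - exp (β * R)) * exp (α₁ * V x + lam x) :=
    ((hV.integrable_sub_mul_exp_add hlam hC R hα₂).sub (hint₁.const_mul (exp (β * R)))).congr
      (ae_of_all _ fun x => by simp only [Pi.sub_apply, hsplit x]; ring)
  have hpos : 0 < ∫ x, (V x - R) * (exp (β * V x) - exp (β * R)) * exp (α₁ * V x + lam x) := by
    refine integral_pos_of_integrable_nonneg_nonzero (x := 0) (by fun_prop) hcross
      (fun x => mul_nonneg (sub_mul_exp_mul_sub_nonneg (by linarith) _ _) (exp_pos _).le) ?_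
    have : exp (β * R) ≠ 1 := by
      rw [Ne, exp_eq_one_iff]; exact mul_ne_zero (by linarith) hR
    simp only [hV.map_zero, mul_zero, exp_zero, zero_sub]
    exact mul_ne_zero (mul_ne_zero (neg_ne_zero.2 hR) (sub_ne_zero.2 this.symm)) (exp_pos _).ne'
  have hdecomp : momentGap V lam R α₂ =
      (∫ x, (V x - R) * (exp (β * V x) - exp (β * R)) * exp (α₁ * V x + lam x)) +
        exp (β * R) * momentGap V lam R α₁ := by
    simp only [momentGap, hsplit]
    rw [integral_add hcross (hint₁.const_mul _), integral_const_mul]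
  rw [hdecomp]
  exact add_pos_of_pos_of_nonneg hpos (mul_nonneg (exp_pos _).le h₁)

theorem eq_of_momentGap_eq_zero (hV : IsOrlicz V) (hlam : Continuous lam)
    (hC : ∀ x, |lam x| ≤ C) (hR : R ≠ 0) {α₁ α₂ : ℝ} (hα₁ : α₁ < 0) (hα₂ : α₂ < 0)
    (h₁ : momentGap V lam R α₁ = 0) (h₂ : momentGap V lam R α₂ = 0) : α₁ = α₂ := by
  rcases lt_trichotomy α₁ α₂ with h | h | h
  · exact absurd h₂ (momentGap_pos_of_lt hV hlam hC hR h hα₂ h₁.ge).ne'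
  · exact h
  · exact absurd h₁ (momentGap_pos_of_lt hV hlam hC hR h hα₁ h₂.ge).ne'

theorem lt_of_momentGap_neg_of_pos (hV : IsOrlicz V) (hlam : Continuous lam)
    (hC : ∀ x, |lam x| ≤ C) (hR : R ≠ 0) {a b : ℝ} (ha₀ : a < 0)
    (ha : momentGap V lam R a < 0) (hb : 0 < momentGap V lam R b) : a < b := by
  by_contra! hba
  rcases hba.lt_or_eq with hba | rfl
  · exact (momentGap_pos_of_lt hV hlam hC hR hba ha₀ hb.le).not_gt ha
  · exact ha.not_gt hb

theorem exists_momentGap_neg (hV : IsOrlicz V) (hlam : Continuous lam)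
    (hC : ∀ x, |lam x| ≤ C) (hR : 0 < R) : ∃ a < 0, momentGap V lam R a < 0 := by
  obtain ⟨d, hd, hVd⟩ : ∃ d > 0, ∀ x, |x| ≤ d → V x ≤ R / 2 := by
    obtain ⟨δ, hδ, h⟩ :=
      Metric.continuousAt_iff.1 hV.continuous.continuousAt (R / 2) (by positivity)
    refine ⟨δ / 2, by positivity, fun x hx => ?_⟩
    have := h (show dist x 0 < δ by rw [Real.dist_eq, sub_zero]; linarith)
    rw [Real.dist_eq, hV.map_zero, sub_zero] at this
    exact (le_abs_self _).trans this.le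
  set K := ∫ x, V x * exp (-1 * V x + lam x)
  have hlim : Tendsto (fun a => exp (a * (R / 2)) * (exp R * K)) atBot (𝓝 0) := by
    simpa using (tendsto_exp_atBot.comp (tendsto_id.atBot_mul_const (half_pos hR))).mul_const
      (exp R * K)
  obtain ⟨a, ha, ha₁⟩ :=
    ((hlim.eventually (gt_mem_nhds (by positivity : 0 < R * d * exp (-C)))).and
      (eventually_le_atBot (-1))).exists
  refine ⟨a, by linarith, ?_⟩
  set c := R / 2 * exp (a * (R / 2) - C) with hc
  have hbound : ∀ x, (V x - R) * exp (a * V x + lam x) ≤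
      exp ((a + 1) * R) * (V x * exp (-1 * V x + lam x)) -
        (Icc (-d) d).indicator (fun _ => c) x := by
    intro x
    have hVx := hV.nonneg x
    by_cases hx : x ∈ Icc (-d) d
    · have := sub_mul_exp_le_of_le_half (by linarith : a ≤ 0) hR.le (hVd x (abs_le.2 hx))
        (abs_le.1 (hC x)).1
      have : 0 ≤ exp ((a + 1) * R) * (V x * exp (-1 * V x + lam x)) := by positivity
      rw [indicator_of_mem hx]
      linarith
    · rw [indicator_of_notMem hx, sub_zero]
      exact sub_mul_exp_le_exp_mul ha₁ hR.le hVx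
  have hK := hV.integrable_mul_exp_add hlam hC (show (-1 : ℝ) < 0 by norm_num)
  have e₁ : exp ((a + 1) * R) = exp (a * (R / 2)) * exp (a * (R / 2)) * exp R := by
    rw [← exp_add, ← exp_add]; ring_nf
  have e₂ : exp (a * (R / 2) - C) = exp (a * (R / 2)) * exp (-C) := by
    rw [← exp_add]; ring_nf
  calc momentGap V lam R a
      ≤ ∫ x, (exp ((a + 1) * R) * (V x * exp (-1 * V x + lam x)) -
          (Icc (-d) d).indicator (fun _ => c) x) :=
        integral_mono (hV.integrable_sub_mul_exp_add hlam hC R (by linarith))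
          ((hK.const_mul _).sub (integrable_indicator_Icc_const _ _ _)) hbound
    _ = exp (a * (R / 2)) * (exp (a * (R / 2)) * (exp R * K) - R * d * exp (-C)) := by
        rw [integral_sub (hK.const_mul _) (integrable_indicator_Icc_const _ _ _),
          integral_const_mul, integral_indicator_Icc_const (by linarith), e₁, hc, e₂]
        ring
    _ < 0 := mul_neg_of_pos_of_neg (exp_pos _) (by linarith)

theorem exists_momentGap_pos (hV : IsOrlicz V) (hlam : Continuous lam)
    (hC : ∀ x, |lam x| ≤ C) (hR : 0 < R) : ∃ b < 0, 0 < momentGap V lam R b := by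
  obtain ⟨r, hr, hVr⟩ := hV.exists_forall_le_of_le_abs (2 * R)
  set L := 4 * r * exp C ^ 2 + 1
  obtain ⟨M, hM⟩ :=
    (isCompact_Icc (a := r) (b := r + L)).bddAbove_image hV.continuous.continuousOn
  have hlim : Tendsto (fun b => exp (b * M)) (𝓝[<] 0) (𝓝 1) := by
    simpa using ((continuous_id.mul continuous_const).rexp.tendsto (0 : ℝ)).mono_left
      nhdsWithin_le_nhds
  obtain ⟨b, hbM, hb⟩ :=
    ((hlim.eventually (lt_mem_nhds (by norm_num : (1 : ℝ) / 2 < 1))).and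
      self_mem_nhdsWithin).exists
  refine ⟨b, hb, ?_⟩
  set I := Icc r (r + L)
  set J := Icc (-r) r
  have hbound : ∀ x, I.indicator (fun _ => R * exp (b * M - C)) x -
      J.indicator (fun _ => R * exp C) x ≤ (V x - R) * exp (b * V x + lam x) := by
    intro x
    have hlamx := abs_le.1 (hC x)
    have hJ : 0 ≤ J.indicator (fun _ => R * exp C) x :=
      indicator_nonneg (fun _ _ => by positivity) x
    rcases le_or_gt r |x| with hx | hx
    · have hV2R := hVr x hx
      by_cases hxI : x ∈ I
      · rw [indicator_of_mem hxI]
        linarith [le_sub_mul_exp_of_two_mul_le hb.le hR.le hV2R (hM ⟨x, hxI, rfl⟩) hlamx.1]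
      · rw [indicator_of_notMem hxI]
        linarith [mul_nonneg (by linarith : 0 ≤ V x - R) (exp_pos (b * V x + lam x)).le]
    · have hxI : x ∉ I := fun h => by linarith [h.1, le_abs_self x]
      rw [indicator_of_notMem hxI, indicator_of_mem (show x ∈ J from abs_le.1 hx.le), zero_sub]
      exact neg_le_sub_mul_exp hb.le hR.le (hV.nonneg x) hlamx.2
  have hL : 0 < L := by positivity
  have hexpC : exp C * exp (-C) = 1 := by rw [← exp_add, add_neg_cancel, exp_zero]
  calc 0 < R * exp (-C) * (exp (b * M) * L - 2 * r * exp C ^ 2) := by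
        refine mul_pos (by positivity) ?_
        nlinarith
    _ = ∫ x, (I.indicator (fun _ => R * exp (b * M - C)) x -
          J.indicator (fun _ => R * exp C) x) := by
        rw [integral_sub (integrable_indicator_Icc_const _ _ _)
          (integrable_indicator_Icc_const _ _ _), integral_indicator_Icc_const (by linarith),
          integral_indicator_Icc_const (by linarith), sub_eq_add_neg (b * M), exp_add]
        linear_combination (-(2 * r * R * exp C)) * hexpC
    _ ≤ momentGap V lam R b :=
        integral_mono ((integrable_indicator_Icc_const _ _ _).sub
          (integrable_indicator_Icc_const _ _ _))
          (hV.integrable_sub_mul_exp_add hlam hC R hb) hbound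

theorem integral_mul_exp_sub_phiV (f : ℝ → ℝ) {α : ℝ}
    (hZ : 0 < ∫ x, exp (α * V x + lam x)) :
    ∫ x, f x * exp (α * V x + lam x - phiV V lam α) =
      (∫ x, f x * exp (α * V x + lam x)) / ∫ x, exp (α * V x + lam x) := by
  simp only [exp_sub, phiV, exp_log hZ, mul_div_assoc']
  exact integral_div _ _

theorem variance_pos_of_momentGap_eq_zero (hV : IsOrlicz V) (hlam : Continuous lam)
    (hC : ∀ x, |lam x| ≤ C) (hR : R ≠ 0) {α : ℝ} (hα : α < 0) (hgap : momentGap V lam R α = 0) :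
    0 < (∫ x, V x ^ 2 * exp (α * V x + lam x - phiV V lam α)) -
      (∫ x, V x * exp (α * V x + lam x - phiV V lam α)) ^ 2 := by
  have hZ : 0 < ∫ x, exp (α * V x + lam x) := integral_exp_pos (hV.integrable_exp_add hlam hC hα)
  have hmean := (momentGap_eq_zero_iff hV hlam hC R hα).1 hgap
  have hint₂ := hV.integrable_pow_mul_exp hlam hC 2 hα
  have hint₁ := hV.integrable_sub_mul_exp_add hlam hC R hα
  have hint₀ := hV.integrable_exp_add hlam hC hα
  have hint₂₁ : Integrable fun x => V x ^ 2 * exp (α * V x + lam x) -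
      2 * R * ((V x - R) * exp (α * V x + lam x)) := hint₂.sub (hint₁.const_mul _)
  have hsplit : ∀ x, (V x - R) ^ 2 * exp (α * V x + lam x) =
      V x ^ 2 * exp (α * V x + lam x) - 2 * R * ((V x - R) * exp (α * V x + lam x)) -
        R ^ 2 * exp (α * V x + lam x) := fun x => by ring
  have hsq : ∫ x, (V x - R) ^ 2 * exp (α * V x + lam x) =
      (∫ x, V x ^ 2 * exp (α * V x + lam x)) - R ^ 2 * ∫ x, exp (α * V x + lam x) := by
    rw [momentGap] at hgap
    simp only [hsplit]
    rw [integral_sub hint₂₁ (hint₀.const_mul _), integral_sub hint₂ (hint₁.const_mul _),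
      integral_const_mul, integral_const_mul, hgap, mul_zero, sub_zero]
  have hVc := hV.continuous
  have hpos : 0 < ∫ x, (V x - R) ^ 2 * exp (α * V x + lam x) :=
    integral_pos_of_integrable_nonneg_nonzero (x := 0) (by fun_prop)
      ((hint₂₁.sub (hint₀.const_mul (R ^ 2))).congr (ae_of_all _ fun x => (hsplit x).symm))
      (fun x => by positivity) (by simp [hV.map_zero, hR])
  rw [integral_mul_exp_sub_phiV _ hZ, integral_mul_exp_sub_phiV _ hZ, hmean,
    mul_div_assoc, div_self hZ.ne', mul_one, sub_pos, lt_div_iff₀ hZ]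
  linarith

end GibbsWeight

/-- There is a unique `α(λ) < 0` with
`∫ V e^{α(λ)V + λ} = R ∫ e^{α(λ)V + λ}`, and the variance of `V` under the
corresponding Gibbs density is strictly positive and finite. -/
theorem stmt0 (V : ℝ → ℝ) (hV : IsOrlicz V) (R : ℝ) (hR : 0 < R)
    (lam : ℝ → ℝ) (hlamCont : Continuous lam) (hlamBdd : ∃ C : ℝ, ∀ x, |lam x| ≤ C) :
    ∃ α : ℝ, α < 0 ∧
      (∫ x : ℝ, V x * Real.exp (α * V x + lam x))
        = R * ∫ x : ℝ, Real.exp (α * V x + lam x) ∧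
      (∀ α' : ℝ, α' < 0 →
        (∫ x : ℝ, V x * Real.exp (α' * V x + lam x))
          = R * ∫ x : ℝ, Real.exp (α' * V x + lam x) → α' = α) ∧
      Integrable (fun x : ℝ => (V x) ^ 2 * Real.exp (α * V x + lam x - phiV V lam α)) ∧
      0 < (∫ x : ℝ, (V x) ^ 2 * Real.exp (α * V x + lam x - phiV V lam α))
            - (∫ x : ℝ, V x * Real.exp (α * V x + lam x - phiV V lam α)) ^ 2 := by
  obtain ⟨C, hC⟩ := hlamBdd
  obtain ⟨a, ha, hFa⟩ := exists_momentGap_neg hV hlamCont hC hR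
  obtain ⟨b, hb, hFb⟩ := exists_momentGap_pos hV hlamCont hC hR
  have hab := lt_of_momentGap_neg_of_pos hV hlamCont hC hR.ne' ha hFa hFb
  obtain ⟨α, ⟨-, hαb⟩, hα⟩ := intermediate_value_Icc hab.le
    ((continuousOn_momentGap hV hlamCont hC R hb).mono Icc_subset_Iic_self) ⟨hFa.le, hFb.le⟩
  have hα₀ : α < 0 := hαb.trans_lt hb
  refine ⟨α, hα₀, (momentGap_eq_zero_iff hV hlamCont hC R hα₀).1 hα, fun α' hα' h =>
    eq_of_momentGap_eq_zero hV hlamCont hC hR.ne' hα' hα₀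
      ((momentGap_eq_zero_iff hV hlamCont hC R hα').2 h) hα, ?_,
    variance_pos_of_momentGap_eq_zero hV hlamCont hC hR.ne' hα₀ hα⟩
  simp only [exp_sub, ← mul_div_assoc]
  exact (hV.integrable_pow_mul_exp hlamCont hC 2 hα₀).div_const _
end
end

section
/- Let V₁, V₂: ℝ → [0,∞) be Orlicz functions with V₁(x)/V₂(x) → ∞ as |x| → ∞. Set R̃ := sup{ m_{V₂}(ν) : ν a probability measure on ℝ with m_{V₁}(ν) ≤ 1 }, which is finite. Then for every R ∈ [R̃, ∞), every ε-family and every fixed k ∈ ℕ: lim_{ε→0} lim_{n→∞} d_w( λ^{(n,k)}_{1,V₁ | R+ε,V₂}, λ^{(n,k)}_{1,V₁} ) = 0, where λ^{(n,k)}_{1,V₁ | R+ε,V₂} is the law of the first k coordinates of a uniform random point X₁^{n,V₁} on B_1^{n,V₁} conditioned on X₁^{n,V₁} ∈ B_{R+ε}^{n,V₂}, λ^{(n,k)}_{1,V₁} is the law of the first k coordinates of a uniform random point on B_1^{n,V₁}, and d_w is a metric inducing weak convergence of probability measures on ℝ^k (e.g., the Lévy–Prokhorov metric). -/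
/-!
A point `x` of `B₁^{n,V₁}` gives the empirical measure `n⁻¹ ∑ δ_{x_i}`, whose `V₁`-moment is
`n⁻¹ ∑ V₁(x_i) ≤ 1`; by definition of `R̃` its `V₂`-moment `n⁻¹ ∑ V₂(x_i)` is then at most `R̃`.
Hence `B₁^{n,V₁} ⊆ B_{R̃}^{n,V₂} ⊆ B_{R+ε}^{n,V₂}`: conditioning on the larger ball does not change
the uniform law on `B₁^{n,V₁}`, and the distance vanishes for every `n` and `ε`.

`R̃` is finite because the growth condition gives `V₂ ≤ V₁` off a compact set, so
`V₂ ≤ V₁ + C` everywhere and `R̃ ≤ 1 + C`.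
-/

open MeasureTheory Real Filter Topology ENNReal Classical

noncomputable section

/-- The Orlicz ball `B_R^{n,V} = {x ∈ ℝⁿ : ∑ V(x_k) ≤ R n}`. -/
def OrliczBall (V : ℝ → ℝ) (R : ℝ) (n : ℕ) : Set (Fin n → ℝ) :=
  {x | ∑ i, V (x i) ≤ R * n}

/-- The uniform distribution on the Orlicz ball (normalized Lebesgue measure). -/
def unifBall (V : ℝ → ℝ) (R : ℝ) (n : ℕ) : Measure (Fin n → ℝ) :=
  (volume (OrliczBall V R n))⁻¹ • volume.restrict (OrliczBall V R n)

/-- The `V`-moment `m_V(μ) = ∫ V dμ`, as a lower integral in `[0,∞]`. -/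
def mV (V : ℝ → ℝ) (μ : Measure ℝ) : ℝ≥0∞ := ∫⁻ x, ENNReal.ofReal (V x) ∂μ

/-- Projection onto the first `k` coordinates. -/
def proj (k n : ℕ) (x : Fin n → ℝ) : Fin k → ℝ :=
  fun i => if h : (i : ℕ) < n then x ⟨i, h⟩ else 0

/-- `R̃ := sup { m_{V₂}(ν) : m_{V₁}(ν) ≤ 1 }`. -/
def Rtilde (V₁ V₂ : ℝ → ℝ) : ℝ≥0∞ :=
  ⨆ (ν : ProbabilityMeasure ℝ) (_ : mV V₁ (ν : Measure ℝ) ≤ 1), mV V₂ (ν : Measure ℝ)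

open ProbabilityTheory

lemma IsOrlicz.nonneg_s19 {V : ℝ → ℝ} (hV : IsOrlicz V) (x : ℝ) : 0 ≤ V x := hV.2.2.2.2 x

lemma IsOrlicz.pos_s19 {V : ℝ → ℝ} (hV : IsOrlicz V) {x : ℝ} (hx : x ≠ 0) : 0 < V x :=
  hV.2.2.2.1 x hx

lemma IsOrlicz.continuous_s19 {V : ℝ → ℝ} (hV : IsOrlicz V) : Continuous V :=
  continuousOn_univ.mp (hV.1.continuousOn isOpen_univ)

lemma measurableSet_orliczBall {V : ℝ → ℝ} (hV : Continuous V) (R : ℝ) (n : ℕ) :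
    MeasurableSet (OrliczBall V R n) :=
  measurableSet_le (by fun_prop) measurable_const

lemma orliczBall_mono (V : ℝ → ℝ) {R R' : ℝ} (h : R ≤ R') (n : ℕ) :
    OrliczBall V R n ⊆ OrliczBall V R' n := fun _ hx =>
  le_trans hx (mul_le_mul_of_nonneg_right h n.cast_nonneg)

lemma eventually_le_of_tendsto_div_atTop {V₁ V₂ : ℝ → ℝ} (hV₂ : IsOrlicz V₂)
    (hgrow : Tendsto (fun x : ℝ => V₁ x / V₂ x) (atTop ⊔ atBot) atTop) :
    ∀ᶠ x in cocompact ℝ, V₂ x ≤ V₁ x := by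
  rw [cocompact_eq_atBot_atTop, sup_comm]
  have hne : ∀ᶠ x : ℝ in atTop ⊔ atBot, x ≠ 0 :=
    eventually_sup.mpr ⟨eventually_ne_atTop 0, eventually_ne_atBot 0⟩
  filter_upwards [hgrow.eventually_ge_atTop 1, hne] with x hratio hx
  exact (one_le_div (hV₂.pos_s19 hx)).mp hratio

lemma exists_le_add_const_of_eventually_le {X : Type*} [TopologicalSpace X] [Nonempty X]
    {f g : X → ℝ} (hf : Continuous f) (hg : Continuous g) (h : ∀ᶠ x in cocompact X, g x ≤ f x) :
    ∃ C, ∀ x, g x ≤ f x + C := by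
  inhabit X
  -- the positive part of `g - f` vanishes off a compact set, so it attains a maximum
  have hcont : Continuous fun x => max (g x - f x) 0 := by fun_prop
  obtain ⟨x₁, hx₁⟩ := hcont.exists_forall_ge' default
    (h.mono fun x hx => (max_eq_right (sub_nonpos.mpr hx)).trans_le (le_max_right _ _))
  exact ⟨max (g x₁ - f x₁) 0, fun x => by linarith [le_max_left (g x - f x) 0, hx₁ x]⟩

lemma mV_le_add_of_le_add_const {V₁ V₂ : ℝ → ℝ} {C : ℝ} (h : ∀ x, V₂ x ≤ V₁ x + C)
    (ν : Measure ℝ) [IsProbabilityMeasure ν] : mV V₂ ν ≤ mV V₁ ν + ENNReal.ofReal C :=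
  calc mV V₂ ν ≤ ∫⁻ x, (ENNReal.ofReal (V₁ x) + ENNReal.ofReal C) ∂ν :=
        lintegral_mono fun x => (ENNReal.ofReal_le_ofReal (h x)).trans ENNReal.ofReal_add_le
    _ = mV V₁ ν + ENNReal.ofReal C := by
        rw [lintegral_add_right _ measurable_const, lintegral_const, measure_univ, mul_one, mV]

lemma rtilde_ne_top {V₁ V₂ : ℝ → ℝ} (hV₁ : IsOrlicz V₁) (hV₂ : IsOrlicz V₂)
    (hgrow : Tendsto (fun x : ℝ => V₁ x / V₂ x) (atTop ⊔ atBot) atTop) :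
    Rtilde V₁ V₂ ≠ ⊤ := by
  obtain ⟨C, hC⟩ := exists_le_add_const_of_eventually_le hV₁.continuous_s19 hV₂.continuous_s19
    (eventually_le_of_tendsto_div_atTop hV₂ hgrow)
  refine ne_top_of_le_ne_top (b := 1 + ENNReal.ofReal C) (by simp) ?_
  refine iSup₂_le fun ν hν => ?_
  exact (mV_le_add_of_le_add_const hC ν).trans (by gcongr)

def empiricalMeasure {α ι : Type*} [MeasurableSpace α] [Fintype ι] (x : ι → α) : Measure α :=
  (Fintype.card ι : ℝ≥0∞)⁻¹ • ∑ i, Measure.dirac (x i)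

lemma isProbabilityMeasure_empiricalMeasure {α ι : Type*} [MeasurableSpace α] [Fintype ι]
    [Nonempty ι] (x : ι → α) : IsProbabilityMeasure (empiricalMeasure x) := by
  constructor
  simp [empiricalMeasure, ENNReal.inv_mul_cancel]

lemma mV_empiricalMeasure {V : ℝ → ℝ} (hV : ∀ t, 0 ≤ V t) {n : ℕ} (hn : n ≠ 0)
    (x : Fin n → ℝ) : mV V (empiricalMeasure x) = ENNReal.ofReal ((∑ i, V (x i)) / n) := by
  rw [mV, empiricalMeasure, lintegral_smul_measure, lintegral_finsetSum_measure,
    ENNReal.ofReal_div_of_pos (by positivity), ENNReal.ofReal_sum_of_nonneg fun i _ => hV _]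
  simp [lintegral_dirac, ENNReal.div_eq_inv_mul]

lemma mem_orliczBall_iff_mV_empiricalMeasure_le {V : ℝ → ℝ} (hV : ∀ t, 0 ≤ V t) {R : ℝ}
    (hR : 0 ≤ R) {n : ℕ} (hn : n ≠ 0) (x : Fin n → ℝ) :
    x ∈ OrliczBall V R n ↔ mV V (empiricalMeasure x) ≤ ENNReal.ofReal R := by
  rw [mV_empiricalMeasure hV hn, ENNReal.ofReal_le_ofReal_iff hR,
    div_le_iff₀ (by positivity), OrliczBall, Set.mem_ofPred_eq]

lemma orliczBall_one_subset_orliczBall_rtilde {V₁ V₂ : ℝ → ℝ} (hV₁ : ∀ t, 0 ≤ V₁ t)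
    (hV₂ : ∀ t, 0 ≤ V₂ t) (hfin : Rtilde V₁ V₂ ≠ ⊤) (n : ℕ) :
    OrliczBall V₁ 1 n ⊆ OrliczBall V₂ (Rtilde V₁ V₂).toReal n := by
  intro x hx
  rcases eq_or_ne n 0 with rfl | hn
  · simp [OrliczBall]
  have : Nonempty (Fin n) := Fin.pos_iff_nonempty.mp (Nat.pos_of_ne_zero hn)
  rw [mem_orliczBall_iff_mV_empiricalMeasure_le hV₁ zero_le_one hn, ENNReal.ofReal_one] at hx
  rw [mem_orliczBall_iff_mV_empiricalMeasure_le hV₂ ENNReal.toReal_nonneg hn,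
    ENNReal.ofReal_toReal hfin]
  exact le_iSup₂_of_le (f := fun (ν : ProbabilityMeasure ℝ) (_ : mV V₁ ν ≤ 1) => mV V₂ ν)
    ⟨empiricalMeasure x, isProbabilityMeasure_empiricalMeasure x⟩ hx le_rfl

lemma cond_cond_of_subset {Ω : Type*} [MeasurableSpace Ω] (μ : Measure Ω) {B S : Set Ω}
    (hS : MeasurableSet S) (hBS : B ⊆ S) : μ[|B][|S] = μ[|B] := by
  have hrestrict : μ[|B].restrict S = μ[|B] := by
    rw [ProbabilityTheory.cond, Measure.restrict_smul, Measure.restrict_restrict hS,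
      Set.inter_eq_self_of_subset_right hBS]
  rcases eq_or_ne (μ B) 0 with h0 | h0
  · simp [cond_eq_zero_of_meas_eq_zero h0]
  rcases eq_or_ne (μ B) ⊤ with htop | htop
  · simp [cond_eq_zero.mpr (Or.inl htop)]
  rw [ProbabilityTheory.cond, hrestrict, cond_apply' hS, Set.inter_eq_self_of_subset_left hBS,
    ENNReal.inv_mul_cancel h0 htop, inv_one, one_smul]

/-- For a large `V₂`-radius `R ≥ R̃` (with `R̃` finite), conditioning a uniform random
point of `B₁^{n,V₁}` on lying in `B_{R+ε}^{n,V₂}` does not change the limiting law of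
the first `k` coordinates: it merges weakly (Lévy–Prokhorov metric, `n → ∞` followed
by `ε → 0`) with the unconditioned law. -/
theorem stmt19 (V₁ V₂ : ℝ → ℝ) (hV₁ : IsOrlicz V₁) (hV₂ : IsOrlicz V₂)
    (hgrow : Tendsto (fun x : ℝ => V₁ x / V₂ x) (atTop ⊔ atBot) atTop) :
    Rtilde V₁ V₂ ≠ ⊤ ∧
    ∀ R : ℝ, (Rtilde V₁ V₂).toReal ≤ R → ∀ k : ℕ,
      ∀ δ : ℝ, 0 < δ → ∃ ε₀ : ℝ, 0 < ε₀ ∧ ∀ ε : ℝ, 0 < ε → ε ≤ ε₀ →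
        ∃ N : ℕ, ∀ n : ℕ, N ≤ n →
          levyProkhorovDist
            (Measure.map (proj k n)
              (ProbabilityTheory.cond (unifBall V₁ 1 n) (OrliczBall V₂ (R + ε) n)))
            (Measure.map (proj k n) (unifBall V₁ 1 n)) < δ := by
  have hfin := rtilde_ne_top hV₁ hV₂ hgrow
  refine ⟨hfin, fun R hR k δ hδ => ⟨1, one_pos, fun ε hε _ => ⟨0, fun n _ => ?_⟩⟩⟩
  have hsub : OrliczBall V₁ 1 n ⊆ OrliczBall V₂ (R + ε) n :=
    (orliczBall_one_subset_orliczBall_rtilde hV₁.nonneg_s19 hV₂.nonneg_s19 hfin n).trans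
      (orliczBall_mono V₂ (by linarith) n)
  have hcond : (unifBall V₁ 1 n)[|OrliczBall V₂ (R + ε) n] = unifBall V₁ 1 n :=
    cond_cond_of_subset volume (measurableSet_orliczBall hV₂.continuous_s19 _ n) hsub
  rw [hcond, levyProkhorovDist_self]
  exact hδ
end
end
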